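/- The involution γ acts on Fix(β) ⊂ 𝕋³₍₅₆₇₎ by permuting its 4 circle components in 2 pairs without fixed points, and β acts on the 4 components of Fix(γ) likewise; hence the quotient 𝕋³/⟨β,γ⟩ has singular set consisting of exactly 4 circles. -/

import Mathlib

/-- The circle `ℝ/ℤ`. -/
abbrev Circ := AddCircle (1 : ℝ)

/-- The 3-torus `𝕋³ = ℝ³/ℤ³`, with coordinates `(x₅,x₆,x₇)`. -/
abbrev T3 := Fin 3 → Circ

noncomputable def half : Circ := ((1/2 : ℝ) : Circ)
noncomputable def quarter : Circ := ((1/4 : ℝ) : Circ)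
noncomputable def threeQuarter : Circ := ((3/4 : ℝ) : Circ)

/-- The restriction of `β` to `𝕋³₍₅₆₇₎`: `(x₅,x₆,x₇) ↦ (x₅, -x₆+1/2, -x₇)`. -/
noncomputable def bβ (x : T3) : T3 := ![x 0, -x 1 + half, -x 2]

/-- The restriction of `γ` to `𝕋³₍₅₆₇₎`: `(x₅,x₆,x₇) ↦ (-x₅+1/2, x₆, -x₇+1/2)`. -/
noncomputable def bγ (x : T3) : T3 := ![-x 0 + half, x 1, -x 2 + half]

/-- One of the four circles of `Fix(β) = S¹ × {1/4,3/4} × {0,1/2}`. -/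
noncomputable def circβ (b c : Bool) : Set T3 :=
  {x | x 1 = (if b then threeQuarter else quarter) ∧ x 2 = (if c then half else 0)}

/-- One of the four circles of `Fix(γ) = {1/4,3/4} × S¹ × {1/4,3/4}`. -/
noncomputable def circγ (a c : Bool) : Set T3 :=
  {x | x 0 = (if a then threeQuarter else quarter) ∧
       x 2 = (if c then threeQuarter else quarter)}

/-- Four chosen representative circles, one from each pair. -/
noncomputable def chosen : Fin 4 → Set T3 :=
  ![circβ false false, circβ true false, circγ false false, circγ true false]

/-- The orbit-saturation of a set under the group `⟨β,γ⟩`. -/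
noncomputable def sat (S : Set T3) : Set T3 := S ∪ bβ '' S ∪ bγ '' S ∪ (bβ ∘ bγ) '' S

/-! `β` and `γ` commute, and `βγ` has no fixed point since it shifts `x₇` by `1/2`; so a point
has nontrivial stabilizer iff it is fixed by `β` or by `γ`. Being fixed by `β` means
`2x₆ = 1/2` and `2x₇ = 0`, being fixed by `γ` means `2x₅ = 1/2` and `2x₇ = 1/2`: no point is
fixed by both, and as halving in `ℝ/ℤ` has exactly two solutions, each fixed set is four circles.
On `Fix(β)`, `γ` acts by `x₇ ↦ 1/2 - x₇`, swapping the circles `x₇ = 0` and `x₇ = 1/2` at fixed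
`x₆`; so the saturation of a circle of `Fix(β)` is the part of `Fix(β)` at its level of `x₆`,
and symmetrically for `Fix(γ)` with `x₅`. -/

open Set

namespace AddCircle

variable {p : ℝ} [Fact (0 < p)]

theorem two_nsmul_eq_zero_iff {u : AddCircle p} :
    2 • u = 0 ↔ u = 0 ∨ u = ((p / 2 : ℝ) : AddCircle p) := by
  rw [AddCircle.nsmul_eq_zero_iff two_pos]
  constructor
  · rintro ⟨m, hm, rfl⟩
    interval_cases m
    · simp
    · right; congr 1; push_cast; ring
  · rintro (rfl | rfl)
    exacts [⟨0, two_pos, by simp⟩, ⟨1, one_lt_two, by congr 1; push_cast; ring⟩]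

theorem add_self_eq_coe_iff {u : AddCircle p} {c : ℝ} :
    u + u = c ↔ u = ((c / 2 : ℝ) : AddCircle p) ∨ u = ((c / 2 + p / 2 : ℝ) : AddCircle p) := by
  have h : u + u - c = 2 • (u - ((c / 2 : ℝ) : AddCircle p)) := by
    rw [two_nsmul, sub_add_sub_comm, ← coe_add, add_halves]
  rw [← sub_eq_zero, h, two_nsmul_eq_zero_iff, sub_eq_zero, sub_eq_iff_eq_add, coe_add, add_comm]

end AddCircle

namespace Circ

theorem half_ne_zero : half ≠ 0 := by
  rw [half, Ne, ← AddCircle.coe_zero, AddCircle.coe_eq_coe_iff_of_mem_Ico (a := 0)] <;> norm_num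

theorem quarter_ne_threeQuarter : quarter ≠ threeQuarter := by
  rw [quarter, threeQuarter, Ne, AddCircle.coe_eq_coe_iff_of_mem_Ico (a := 0)] <;> norm_num

theorem neg_half : -half = half := by
  rw [half, ← AddCircle.coe_neg, ← AddCircle.coe_add_period]; norm_num

theorem neg_quarter : -quarter = threeQuarter := by
  rw [quarter, threeQuarter, ← AddCircle.coe_neg, ← AddCircle.coe_add_period]; norm_num

theorem neg_threeQuarter : -threeQuarter = quarter := by
  rw [← neg_quarter, neg_neg]

theorem add_self_eq_zero_iff (y : Circ) : y + y = 0 ↔ y = 0 ∨ y = half := by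
  rw [← AddCircle.coe_zero, AddCircle.add_self_eq_coe_iff, half]; norm_num

theorem add_self_eq_half_iff (y : Circ) : y + y = half ↔ y = quarter ∨ y = threeQuarter := by
  rw [half, AddCircle.add_self_eq_coe_iff, quarter, threeQuarter]; norm_num

end Circ

open Circ

theorem T3.ext_iff {x y : T3} : x = y ↔ x 0 = y 0 ∧ x 1 = y 1 ∧ x 2 = y 2 :=
  ⟨fun h => h ▸ ⟨rfl, rfl, rfl⟩, fun ⟨h0, h1, h2⟩ => funext fun i => by fin_cases i <;> assumption⟩

theorem bβ_involutive : Function.Involutive bβ := fun x =>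
  T3.ext_iff.2 ⟨rfl, by simp [bβ], by simp [bβ]⟩

theorem bγ_involutive : Function.Involutive bγ := fun x =>
  T3.ext_iff.2 ⟨by simp [bγ], rfl, by simp [bγ]⟩

theorem commute_bβ_bγ : Function.Commute bβ bγ := fun x =>
  T3.ext_iff.2 ⟨rfl, rfl, by simp [bβ, bγ, neg_half, add_comm]⟩

theorem bβ_bγ_ne_self (x : T3) : bβ (bγ x) ≠ x := fun h => by
  have h2 := congrFun h 2
  simp [bβ, bγ, half_ne_zero] at h2

theorem bβ_eq_self_iff_add_self (x : T3) : bβ x = x ↔ x 1 + x 1 = half ∧ x 2 + x 2 = 0 := by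
  rw [T3.ext_iff]
  change x 0 = x 0 ∧ -x 1 + half = x 1 ∧ -x 2 = x 2 ↔ _
  rw [neg_add_eq_iff_eq_add, neg_eq_iff_add_eq_zero, eq_comm (a := half), eq_self, true_and]

theorem bγ_eq_self_iff_add_self (x : T3) : bγ x = x ↔ x 0 + x 0 = half ∧ x 2 + x 2 = half := by
  rw [T3.ext_iff]
  change -x 0 + half = x 0 ∧ x 1 = x 1 ∧ -x 2 + half = x 2 ↔ _
  rw [neg_add_eq_iff_eq_add, neg_add_eq_iff_eq_add, eq_comm (a := half), eq_comm (a := half),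
    eq_self, true_and]

theorem bβ_eq_self_iff (x : T3) :
    bβ x = x ↔ (x 1 = quarter ∨ x 1 = threeQuarter) ∧ (x 2 = 0 ∨ x 2 = half) := by
  rw [bβ_eq_self_iff_add_self, add_self_eq_half_iff, add_self_eq_zero_iff]

theorem bγ_eq_self_iff (x : T3) :
    bγ x = x ↔ (x 0 = quarter ∨ x 0 = threeQuarter) ∧ (x 2 = quarter ∨ x 2 = threeQuarter) := by
  rw [bγ_eq_self_iff_add_self, add_self_eq_half_iff, add_self_eq_half_iff]

theorem bγ_ne_self_of_bβ_eq_self {x : T3} (h : bβ x = x) : bγ x ≠ x := fun h' =>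
  half_ne_zero (((bγ_eq_self_iff_add_self x).1 h').2.symm.trans ((bβ_eq_self_iff_add_self x).1 h).2)

theorem disjoint_setOf_bβ_eq_self_bγ_eq_self :
    Disjoint {x : T3 | bβ x = x} {x | bγ x = x} :=
  disjoint_left.2 fun _ => bγ_ne_self_of_bβ_eq_self

theorem bβ_eq_self_of_mem_circβ {b c : Bool} {x : T3} (hx : x ∈ circβ b c) : bβ x = x := by
  obtain ⟨h1, h2⟩ := hx
  rw [bβ_eq_self_iff]
  cases b <;> cases c <;> simp_all

theorem bγ_eq_self_of_mem_circγ {a c : Bool} {x : T3} (hx : x ∈ circγ a c) : bγ x = x := by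
  obtain ⟨h0, h2⟩ := hx
  rw [bγ_eq_self_iff]
  cases a <;> cases c <;> simp_all

theorem bγ_image_circβ (b c : Bool) : bγ '' circβ b c = circβ b (!c) := by
  rw [bγ_involutive.image_eq_preimage_symm]
  ext x
  cases c <;> simp [circβ, bγ, neg_add_eq_zero, eq_comm]

theorem bβ_image_circγ (a c : Bool) : bβ '' circγ a c = circγ a (!c) := by
  rw [bβ_involutive.image_eq_preimage_symm]
  ext x
  cases c <;> simp [circγ, bβ, neg_eq_iff_eq_neg, neg_quarter, neg_threeQuarter]

theorem sat_eq_of_forall_bβ_eq_self {S : Set T3} (hS : ∀ x ∈ S, bβ x = x) :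
    sat S = S ∪ bγ '' S := by
  have hβ : bβ '' S = S := (image_congr hS).trans (image_id' S)
  rw [sat, commute_bβ_bγ.comp_eq, image_comp, hβ]
  simp only [union_self, union_assoc]

theorem sat_eq_of_forall_bγ_eq_self {S : Set T3} (hS : ∀ x ∈ S, bγ x = x) :
    sat S = S ∪ bβ '' S := by
  have hγ : bγ '' S = S := (image_congr hS).trans (image_id' S)
  rw [sat, image_comp, hγ, union_right_comm S]
  simp only [union_self, union_assoc]

theorem sat_circβ (b c : Bool) :
    sat (circβ b c) = {x | bβ x = x ∧ x 1 = if b then threeQuarter else quarter} := by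
  rw [sat_eq_of_forall_bβ_eq_self fun _ => bβ_eq_self_of_mem_circβ, bγ_image_circβ]
  ext x
  rw [mem_ofPred_eq, bβ_eq_self_iff]
  cases b <;> cases c <;>
    simp only [circβ, Bool.false_eq_true, ↓reduceIte, Bool.not_false, Bool.not_true, mem_union,
      mem_ofPred_eq] <;> tauto

theorem sat_circγ (a c : Bool) :
    sat (circγ a c) = {x | bγ x = x ∧ x 0 = if a then threeQuarter else quarter} := by
  rw [sat_eq_of_forall_bγ_eq_self fun _ => bγ_eq_self_of_mem_circγ, bβ_image_circγ]
  ext x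
  rw [mem_ofPred_eq, bγ_eq_self_iff]
  cases a <;> cases c <;>
    simp only [circγ, Bool.false_eq_true, ↓reduceIte, Bool.not_false, Bool.not_true, mem_union,
      mem_ofPred_eq] <;> tauto

theorem disjoint_sat_circβ_sat_circγ (b c a c' : Bool) :
    Disjoint (sat (circβ b c)) (sat (circγ a c')) := by
  rw [sat_circβ, sat_circγ]
  exact disjoint_setOf_bβ_eq_self_bγ_eq_self.mono (fun _ h => h.1) (fun _ h => h.1)

theorem disjoint_sat_circβ (c c' : Bool) :
    Disjoint (sat (circβ false c)) (sat (circβ true c')) := by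
  rw [sat_circβ, sat_circβ]
  exact disjoint_left.2 fun _ h h' => quarter_ne_threeQuarter (h.2.symm.trans h'.2)

theorem disjoint_sat_circγ (c c' : Bool) :
    Disjoint (sat (circγ false c)) (sat (circγ true c')) := by
  rw [sat_circγ, sat_circγ]
  exact disjoint_left.2 fun _ h h' => quarter_ne_threeQuarter (h.2.symm.trans h'.2)

/-- `γ` permutes the 4 circle components of `Fix(β)` in 2 pairs without fixed
points, and `β` likewise permutes the 4 components of `Fix(γ)`; hence the
singular set of `𝕋³/⟨β,γ⟩` (the image of the points with nontrivial
stabilizer) consists of exactly 4 circles. -/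
theorem singular_set_four_circles :
    -- `γ` maps the circle `circβ b c` onto `circβ b (!c)`, without fixed points
    (∀ b c, bγ '' circβ b c = circβ b (!c)) ∧
    (∀ b c, ∀ x ∈ circβ b c, bγ x ≠ x) ∧
    -- `β` maps the circle `circγ a c` onto `circγ a (!c)`, without fixed points
    (∀ a c, bβ '' circγ a c = circγ a (!c)) ∧
    (∀ a c, ∀ x ∈ circγ a c, bβ x ≠ x) ∧
    -- the points with nontrivial stabilizer are exactly `Fix(β) ∪ Fix(γ)` …
    (∀ x : T3, (bβ x = x ∨ bγ x = x ∨ bβ (bγ x) = x) ↔ (bβ x = x ∨ bγ x = x)) ∧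
    -- … and this set is the saturation of 4 circles with disjoint saturations,
    -- so the singular set of the quotient is exactly 4 circles
    ({x : T3 | bβ x = x ∨ bγ x = x} = ⋃ i, sat (chosen i)) ∧
    (∀ i j, i ≠ j → Disjoint (sat (chosen i)) (sat (chosen j))) := by
  refine ⟨bγ_image_circβ, fun b c x hx => bγ_ne_self_of_bβ_eq_self (bβ_eq_self_of_mem_circβ hx),
    bβ_image_circγ, fun a c x hx h => bγ_ne_self_of_bβ_eq_self h (bγ_eq_self_of_mem_circγ hx),
    fun x => by simp only [bβ_bγ_ne_self x, or_false], ?_, ?_⟩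
  · ext x
    have hβ := (bβ_eq_self_iff x).1
    have hγ := (bγ_eq_self_iff x).1
    simp only [mem_ofPred_eq, chosen, mem_iUnion, Fin.exists_fin_succ, Fin.isValue,
      Matrix.cons_val_zero, sat_circβ, Bool.false_eq_true, ↓reduceIte, Matrix.cons_val_succ,
      sat_circγ, Matrix.cons_val_fin_one, exists_const]
    tauto
  · refine (pairwise_disjoint_on _).2 fun i j hij => ?_
    fin_cases i <;> fin_cases j <;>
      simp only [Fin.zero_eta, Fin.mk_one, Fin.reduceFinMk, Fin.reduceLT, Fin.lt_one_iff,
        Fin.reduceEq, not_lt_zero, lt_self_iff_false, chosen, Matrix.cons_val_zero,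
        Matrix.cons_val_one, Matrix.cons_val] at hij ⊢
    all_goals first
      | exact disjoint_sat_circβ _ _
      | exact disjoint_sat_circγ _ _
      | exact disjoint_sat_circβ_sat_circγ _ _ _ _
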